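/- Suppose ξ : S → ℝ satisfies ξ_s > 0 for all s ∈ S, and λ ≥ 0 is such that Σ_{s'∈S} p(s'|s,a) ξ_{s'} ≤ λ ξ_s for all s ∈ S and a ∈ A, with γλ < 1. Then the soft Bellman operator T has a unique fixed point Λ*_β : S×A → ℝ (i.e., Λ*_β = TΛ*_β), and for every Λ_0 : S×A → ℝ and every n ∈ ℕ, ‖T^n Λ_0 − Λ*_β‖_ξ ≤ (γλ)^n ‖Λ_0 − Λ*_β‖_ξ; in particular the fixed-point iterates T^n Λ_0 converge to Λ*_β. -/

import Mathlib

/-- The soft Bellman operator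
`[TΛ](s,a) = Σ_{s'} p(s'|s,a)(c(s,a,s') + (γ/β) log p(s'|s,a))
  − (γ²/β) Σ_{s'} p(s'|s,a) log Σ_{a'} exp(−(β/γ)Λ(s',a'))`. -/
noncomputable def softBellman {S A : Type*} [Fintype S] [Fintype A]
    (p : S → A → S → ℝ) (c : S → A → S → ℝ) (β γ : ℝ)
    (Λ : S → A → ℝ) : S → A → ℝ :=
  fun s a =>
    (∑ s', p s a s' * (c s a s' + (γ / β) * Real.log (p s a s'))) -
      (γ ^ 2 / β) * ∑ s', p s a s' * Real.log (∑ a', Real.exp (-(β / γ) * Λ s' a'))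

/-- Weighted maximum norm `‖X‖_ξ = max_{s,a} |X(s,a)| / ξ(s)`. -/
noncomputable def wnorm {S A : Type*} [Fintype S] [Fintype A] [Nonempty S] [Nonempty A]
    (ξ : S → ℝ) (X : S → A → ℝ) : ℝ :=
  Finset.univ.sup' Finset.univ_nonempty (fun sa : S × A => |X sa.1 sa.2| / ξ sa.1)

/-!
Log-sum-exp is `1`-Lipschitz for the sup norm, so `|TΛ₁ - TΛ₂|(s,a)` is at most
`γ Σ_{s'} p(s'|s,a) max_{a'} |Λ₁ - Λ₂|(s',a') ≤ γλ ξ_s ‖Λ₁ - Λ₂‖_ξ`. Dividing every function by `ξ`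
turns `‖·‖_ξ` into the sup metric of `S → A → ℝ`, in which `T` thus becomes a `γλ`-contraction
of a complete space; Banach's fixed point theorem gives the fixed point and the geometric rate.
-/

open Finset Function

namespace Real

theorem log_sum_exp_le_log_sum_exp_add {ι : Type*} [Fintype ι] [Nonempty ι] {u v : ι → ℝ}
    {M : ℝ} (h : ∀ i, u i ≤ v i + M) :
    log (∑ i, exp (u i)) ≤ log (∑ i, exp (v i)) + M := by
  have hpos (w : ι → ℝ) : 0 < ∑ i, exp (w i) := sum_pos (fun i _ => exp_pos _) univ_nonempty
  have hle : ∑ i, exp (u i) ≤ exp M * ∑ i, exp (v i) := by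
    rw [mul_sum]
    gcongr with i
    rw [← exp_add]
    exact exp_le_exp.2 (by linarith [h i])
  calc log (∑ i, exp (u i)) ≤ log (exp M * ∑ i, exp (v i)) := log_le_log (hpos u) hle
    _ = log (∑ i, exp (v i)) + M := by
        rw [log_mul (exp_ne_zero M) (hpos v).ne', log_exp, add_comm]

theorem abs_log_sum_exp_sub_log_sum_exp_le {ι : Type*} [Fintype ι] [Nonempty ι] {u v : ι → ℝ}
    {M : ℝ} (h : ∀ i, |u i - v i| ≤ M) :
    |log (∑ i, exp (u i)) - log (∑ i, exp (v i))| ≤ M :=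
  abs_sub_le_iff.2
    ⟨sub_le_iff_le_add'.2 (log_sum_exp_le_log_sum_exp_add fun i =>
        sub_le_iff_le_add'.1 (abs_sub_le_iff.1 (h i)).1),
      sub_le_iff_le_add'.2 (log_sum_exp_le_log_sum_exp_add fun i =>
        sub_le_iff_le_add'.1 (abs_sub_le_iff.1 (h i)).2)⟩

end Real

theorem exists_isFixedPt_of_contractingWith_conj {α β : Type*} [MetricSpace β] [CompleteSpace β]
    [Nonempty β] (e : α ≃ β) {K : NNReal} {f : α → α} (hf : ContractingWith K (e.conj f)) :
    ∃ x, IsFixedPt f x ∧ (∀ y, IsFixedPt f y → y = x) ∧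
      ∀ y n, dist (e (f^[n] y)) (e x) ≤ (K : ℝ) ^ n * dist (e y) (e x) := by
  have hconj : Semiconj e f (e.conj f) := e.semiconj_conj f
  have hfix := hf.fixedPoint_isFixedPt
  set x' := hf.fixedPoint (e.conj f)
  have he : e (e.symm x') = x' := e.apply_symm_apply x'
  refine ⟨e.symm x', ?_, fun y hy => e.eq_symm_apply.2 (hf.fixedPoint_unique (hy.map hconj)),
    fun y n => ?_⟩
  · exact e.injective (by simpa [IsFixedPt] using hfix)
  · calc dist (e (f^[n] y)) (e (e.symm x'))
        = dist ((e.conj f)^[n] (e y)) ((e.conj f)^[n] x') := by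
          rw [he, hconj.iterate_right n y, (hfix.iterate n).eq]
      _ ≤ ↑(K ^ n) * dist (e y) x' := (hf.toLipschitzWith.iterate n).dist_le_mul _ _
      _ = (K : ℝ) ^ n * dist (e y) (e (e.symm x')) := by rw [he, NNReal.coe_pow]

section SoftBellman

variable {S A : Type*}

theorem softBellman_sub_softBellman [Fintype S] [Fintype A] (p c : S → A → S → ℝ) (β γ : ℝ)
    (Λ₁ Λ₂ : S → A → ℝ) (s : S) (a : A) :
    softBellman p c β γ Λ₁ s a - softBellman p c β γ Λ₂ s a =
      γ ^ 2 / β * ∑ s', p s a s' * (Real.log (∑ a', Real.exp (-(β / γ) * Λ₂ s' a')) -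
        Real.log (∑ a', Real.exp (-(β / γ) * Λ₁ s' a'))) := by
  simp only [softBellman, mul_sub, sum_sub_distrib]
  ring

theorem abs_softBellman_sub_softBellman_le [Fintype S] [Fintype A] [Nonempty A]
    {p : S → A → S → ℝ} (hp : ∀ s a s', 0 ≤ p s a s') (c : S → A → S → ℝ) {β γ : ℝ}
    (hβ : 0 < β) (hγ : 0 < γ)
    {Λ₁ Λ₂ : S → A → ℝ} {D : S → ℝ} (hD : ∀ s a, |Λ₁ s a - Λ₂ s a| ≤ D s) (s : S) (a : A) :
    |softBellman p c β γ Λ₁ s a - softBellman p c β γ Λ₂ s a| ≤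
      γ * ∑ s', p s a s' * D s' := by
  have hlog : ∀ s', |Real.log (∑ a', Real.exp (-(β / γ) * Λ₂ s' a')) -
      Real.log (∑ a', Real.exp (-(β / γ) * Λ₁ s' a'))| ≤ β / γ * D s' := fun s' =>
    Real.abs_log_sum_exp_sub_log_sum_exp_le fun a' => by
      rw [← mul_sub, abs_mul, abs_neg, abs_of_pos (div_pos hβ hγ), abs_sub_comm]
      exact mul_le_mul_of_nonneg_left (hD s' a') (div_pos hβ hγ).le
  rw [softBellman_sub_softBellman, abs_mul, abs_of_pos (by positivity)]
  calc γ ^ 2 / β * |∑ s', p s a s' * (Real.log (∑ a', Real.exp (-(β / γ) * Λ₂ s' a')) -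
        Real.log (∑ a', Real.exp (-(β / γ) * Λ₁ s' a')))|
      ≤ γ ^ 2 / β * ∑ s', p s a s' * (β / γ * D s') := by
        gcongr
        refine (abs_sum_le_sum_abs _ _).trans (sum_le_sum fun s' _ => ?_)
        rw [abs_mul, abs_of_nonneg (hp s a s')]
        exact mul_le_mul_of_nonneg_left (hlog s') (hp s a s')
    _ = γ * ∑ s', p s a s' * D s' := by
        rw [mul_sum, mul_sum]
        refine sum_congr rfl fun s' _ => ?_
        field_simp

noncomputable def weightEquiv (ξ : S → ℝ) (hξ : ∀ s, 0 < ξ s) : (S → A → ℝ) ≃ (S → A → ℝ) where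
  toFun X s a := X s a / ξ s
  invFun Y s a := Y s a * ξ s
  left_inv X := by funext s a; exact div_mul_cancel₀ _ (hξ s).ne'
  right_inv Y := by funext s a; exact mul_div_cancel_right₀ _ (hξ s).ne'

theorem dist_weightEquiv_apply {ξ : S → ℝ} (hξ : ∀ s, 0 < ξ s) (X Y : S → A → ℝ) (s : S)
    (a : A) : dist (weightEquiv ξ hξ X s a) (weightEquiv ξ hξ Y s a) = |X s a - Y s a| / ξ s := by
  simp only [weightEquiv, Equiv.coe_fn_mk, Real.dist_eq, ← sub_div, abs_div, abs_of_pos (hξ s)]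

theorem wnorm_sub_eq_dist_weightEquiv [Fintype S] [Fintype A] [Nonempty S] [Nonempty A]
    {ξ : S → ℝ} (hξ : ∀ s, 0 < ξ s) (X Y : S → A → ℝ) :
    wnorm ξ (fun s a => X s a - Y s a) = dist (weightEquiv ξ hξ X) (weightEquiv ξ hξ Y) := by
  refine le_antisymm (sup'_le _ _ fun sa _ => ?_)
    (dist_pi_le_iff'.2 fun s => dist_pi_le_iff'.2 fun a => ?_)
  · rw [← dist_weightEquiv_apply hξ]
    exact (dist_le_pi_dist _ _ sa.2).trans (dist_le_pi_dist _ _ sa.1)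
  · rw [dist_weightEquiv_apply hξ]
    exact le_sup' (fun sa : S × A => |X sa.1 sa.2 - Y sa.1 sa.2| / ξ sa.1) (mem_univ (s, a))

theorem dist_weightEquiv_softBellman_le [Fintype S] [Fintype A] [Nonempty S] [Nonempty A]
    {p : S → A → S → ℝ} (hp : ∀ s a s', 0 ≤ p s a s') (c : S → A → S → ℝ) {β γ : ℝ}
    (hβ : 0 < β) (hγ : 0 < γ)
    {ξ : S → ℝ} (hξ : ∀ s, 0 < ξ s) {lam : ℝ} (hlam : ∀ s a, ∑ s', p s a s' * ξ s' ≤ lam * ξ s)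
    (X Y : S → A → ℝ) :
    dist (weightEquiv ξ hξ (softBellman p c β γ X)) (weightEquiv ξ hξ (softBellman p c β γ Y)) ≤
      γ * lam * dist (weightEquiv ξ hξ X) (weightEquiv ξ hξ Y) := by
  set d := dist (weightEquiv ξ hξ X) (weightEquiv ξ hξ Y)
  have hD : ∀ s a, |X s a - Y s a| ≤ d * ξ s := fun s a => by
    rw [← div_le_iff₀ (hξ s), ← dist_weightEquiv_apply hξ]
    exact (dist_le_pi_dist _ _ a).trans (dist_le_pi_dist _ _ s)
  refine dist_pi_le_iff'.2 fun s => dist_pi_le_iff'.2 fun a => ?_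
  rw [dist_weightEquiv_apply hξ, div_le_iff₀ (hξ s)]
  calc |softBellman p c β γ X s a - softBellman p c β γ Y s a|
      ≤ γ * ∑ s', p s a s' * (d * ξ s') := abs_softBellman_sub_softBellman_le hp c hβ hγ hD s a
    _ = γ * d * ∑ s', p s a s' * ξ s' := by
        rw [mul_sum, mul_sum]
        exact sum_congr rfl fun s' _ => by ring
    _ ≤ γ * d * (lam * ξ s) := by gcongr; exact hlam s a
    _ = γ * lam * d * ξ s := by ring

end SoftBellman

theorem softBellman_unique_fixedPoint_and_convergence_general
    {S A : Type*} [Fintype S] [Fintype A] [Nonempty S] [Nonempty A]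
    (p : S → A → S → ℝ) (c : S → A → S → ℝ) (β γ : ℝ)
    (hp0 : ∀ s a s', 0 ≤ p s a s')
    (hβ : 0 < β) (hγ0 : 0 < γ)
    (ξ : S → ℝ) (hξ : ∀ s, 0 < ξ s)
    (lam : ℝ) (hlam0 : 0 ≤ lam)
    (hlam : ∀ s a, ∑ s', p s a s' * ξ s' ≤ lam * ξ s)
    (hcontr : γ * lam < 1) :
    ∃ Λstar : S → A → ℝ,
      softBellman p c β γ Λstar = Λstar ∧
      (∀ Λ' : S → A → ℝ, softBellman p c β γ Λ' = Λ' → Λ' = Λstar) ∧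
      (∀ (Λ0 : S → A → ℝ) (n : ℕ),
        wnorm ξ (fun s a => (softBellman p c β γ)^[n] Λ0 s a - Λstar s a) ≤
          (γ * lam) ^ n * wnorm ξ (fun s a => Λ0 s a - Λstar s a)) ∧
      (∀ Λ0 : S → A → ℝ,
        Filter.Tendsto
          (fun n => wnorm ξ (fun s a => (softBellman p c β γ)^[n] Λ0 s a - Λstar s a))
          Filter.atTop (nhds 0)) := by
  have hq : 0 ≤ γ * lam := mul_nonneg hγ0.le hlam0
  have hK : ContractingWith (γ * lam).toNNReal ((weightEquiv ξ hξ).conj (softBellman p c β γ)) :=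
    ⟨Real.toNNReal_lt_one.2 hcontr, LipschitzWith.of_dist_le_mul fun X Y => by
      simpa [Real.coe_toNNReal _ hq] using dist_weightEquiv_softBellman_le hp0 c hβ hγ0 hξ hlam
        ((weightEquiv ξ hξ).symm X) ((weightEquiv ξ hξ).symm Y)⟩
  obtain ⟨Λstar, hfix, huniq, hrate⟩ := exists_isFixedPt_of_contractingWith_conj _ hK
  have hrate' : ∀ (Λ0 : S → A → ℝ) (n : ℕ),
      wnorm ξ (fun s a => (softBellman p c β γ)^[n] Λ0 s a - Λstar s a) ≤
        (γ * lam) ^ n * wnorm ξ (fun s a => Λ0 s a - Λstar s a) := by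
    simpa only [wnorm_sub_eq_dist_weightEquiv hξ, Real.coe_toNNReal _ hq] using hrate
  refine ⟨Λstar, hfix, huniq, hrate', fun Λ0 => squeeze_zero (fun n => ?_) (hrate' Λ0) ?_⟩
  · rw [wnorm_sub_eq_dist_weightEquiv hξ]
    exact dist_nonneg
  · simpa using (tendsto_pow_atTop_nhds_zero_of_lt_one hq hcontr).mul_const
      (wnorm ξ fun s a => Λ0 s a - Λstar s a)

/-- Under the weighted-norm contraction conditions, the soft Bellman operator has a
unique fixed point `Λ*`, and the fixed-point iterates `T^n Λ₀` converge to it at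
geometric rate `(γλ)^n` in `‖·‖_ξ`. -/
theorem softBellman_unique_fixedPoint_and_convergence
    {S A : Type*} [Fintype S] [Fintype A] [Nonempty S] [Nonempty A]
    (p : S → A → S → ℝ) (c : S → A → S → ℝ) (β γ : ℝ)
    (hp0 : ∀ s a s', 0 ≤ p s a s') (hp1 : ∀ s a, ∑ s', p s a s' = 1)
    (hβ : 0 < β) (hγ0 : 0 < γ) (hγ1 : γ ≤ 1)
    (ξ : S → ℝ) (hξ : ∀ s, 0 < ξ s)
    (lam : ℝ) (hlam0 : 0 ≤ lam)
    (hlam : ∀ s a, ∑ s', p s a s' * ξ s' ≤ lam * ξ s)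
    (hcontr : γ * lam < 1) :
    ∃ Λstar : S → A → ℝ,
      softBellman p c β γ Λstar = Λstar ∧
      (∀ Λ' : S → A → ℝ, softBellman p c β γ Λ' = Λ' → Λ' = Λstar) ∧
      (∀ (Λ0 : S → A → ℝ) (n : ℕ),
        wnorm ξ (fun s a => (softBellman p c β γ)^[n] Λ0 s a - Λstar s a) ≤
          (γ * lam) ^ n * wnorm ξ (fun s a => Λ0 s a - Λstar s a)) ∧
      (∀ Λ0 : S → A → ℝ,
        Filter.Tendsto
          (fun n => wnorm ξ (fun s a => (softBellman p c β γ)^[n] Λ0 s a - Λstar s a))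
          Filter.atTop (nhds 0)) :=
  softBellman_unique_fixedPoint_and_convergence_general p c β γ hp0 hβ hγ0 ξ hξ lam hlam0 hlam
    hcontr
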